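/- arXiv:2605.00375 — 3 statements merged into one kernel-verified Lean document; each statement's English description precedes it below -/
import Mathlib

section
/- For centered probability measures with finite second moment, the supremum over k-dimensional subspaces α of the Fourier metric d_2 between the projections P_α μ and P_α ν equals d_2(μ, ν); i.e. sup_{α ∈ G_{k,d}} d_2(P_α μ, P_α ν) = d_2(μ, ν). -/
/-! The Fourier–slice theorem identifies `d₂(P_α μ, P_α ν)` with the supremum of the same
quotient `‖μ̂ ξ - ν̂ ξ‖ / ‖ξ‖²` over `ξ ∈ αᗮ \ {0}`, and these sets cover `ℝᵈ \ {0}` as `α` ranges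
over `k`-planes. Since `⨆` on `ℝ` is `0` for an unbounded family, the quotient has to be bounded:
for a centred measure with finite second moment, `‖μ̂ ξ - 1‖ ≤ 2 (∫ ‖x‖²) ‖ξ‖²` by the second-order
bound on `e^{-it} - 1 + it`. -/

open MeasureTheory

noncomputable section

/-- The Fourier transform `μ̂(ξ) = ∫ e^{-i x·ξ} dμ(x)` of a measure on a real
inner product space. -/
def fourierT {F : Type*} [NormedAddCommGroup F] [InnerProductSpace ℝ F] [MeasurableSpace F]
    (μ : Measure F) (ξ : F) : ℂ :=
  ∫ x, Complex.exp (-Complex.I * ((inner ℝ x ξ : ℝ) : ℂ)) ∂μ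

/-- The Fourier metric `d₂(μ,ν) = sup_{ξ ≠ 0} |μ̂(ξ) - ν̂(ξ)| / |ξ|²`. -/
def fourierDist2 {F : Type*} [NormedAddCommGroup F] [InnerProductSpace ℝ F] [MeasurableSpace F]
    (μ ν : Measure F) : ℝ :=
  ⨆ ξ : {ξ : F // ξ ≠ 0}, ‖fourierT μ ξ - fourierT ν ξ‖ / ‖(ξ : F)‖ ^ 2

open Complex in
theorem norm_exp_neg_I_mul_sub_one_add_I_mul_le (t : ℝ) :
    ‖exp (-I * t) - 1 + I * t‖ ≤ 2 * t ^ 2 := by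
  have hz : ‖-I * (t : ℂ)‖ = |t| := by simp
  have hsub : exp (-I * t) - 1 + I * t = exp (-I * t) - 1 - -I * t := by ring
  rw [hsub]
  rcases le_or_gt |t| 1 with ht | ht
  · calc ‖exp (-I * t) - 1 - -I * t‖ ≤ ‖-I * (t : ℂ)‖ ^ 2 :=
          norm_exp_sub_one_sub_id_le (hz.trans_le ht)
      _ ≤ 2 * t ^ 2 := by rw [hz, sq_abs]; linarith [sq_nonneg t]
  · have hexp : ‖exp (-I * t) - 1‖ ≤ |t| := by
      simpa using Real.norm_exp_I_mul_ofReal_sub_one_le (x := -t)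
    calc ‖exp (-I * t) - 1 - -I * t‖ ≤ ‖exp (-I * t) - 1‖ + ‖-I * (t : ℂ)‖ := norm_sub_le _ _
      _ ≤ 2 * t ^ 2 := by rw [hz]; nlinarith [abs_mul_abs_self t]

theorem Real.iSup_iSup_comp_eq_iSup {ι β : Type*} {κ : ι → Type*} {f : β → ℝ} (hf : 0 ≤ f)
    (hbdd : BddAbove (Set.range f)) (g : ∀ i, κ i → β) (hg : ∀ b, ∃ i k, g i k = b) :
    ⨆ i, ⨆ k, f (g i k) = ⨆ b, f b := by
  have hle (i : ι) : ⨆ k, f (g i k) ≤ ⨆ b, f b :=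
    Real.iSup_le (fun k => le_ciSup hbdd _) (Real.iSup_nonneg hf)
  have hbdd' : BddAbove (Set.range fun i => ⨆ k, f (g i k)) :=
    ⟨_, Set.forall_mem_range.2 hle⟩
  refine le_antisymm (Real.iSup_le hle (Real.iSup_nonneg hf)) ?_
  refine Real.iSup_le (fun b => ?_) (Real.iSup_nonneg fun i => Real.iSup_nonneg fun k => hf _)
  obtain ⟨i, k, rfl⟩ := hg b
  calc f (g i k) ≤ ⨆ k, f (g i k) :=
        le_ciSup (hbdd.mono (Set.range_subset_iff.2 fun k => Set.mem_range_self (g i k))) k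
    _ ≤ ⨆ i, ⨆ k, f (g i k) := le_ciSup hbdd' i

theorem Submodule.exists_le_finrank_eq {K V : Type*} [DivisionRing K] [AddCommGroup V]
    [Module K V] (W : Submodule K V) {k : ℕ} (hk : k ≤ Module.finrank K W) :
    ∃ U ≤ W, Module.finrank K U = k := by
  obtain ⟨s, hcard, hs⟩ := exists_finset_linearIndependent_of_le_finrank hk
  refine ⟨(span K (s : Set W)).map W.subtype, map_subtype_le _ _, ?_⟩
  rw [finrank_map_subtype_eq, finrank_span_finset_eq_card hs, hcard]

theorem exists_finrank_eq_mem_orthogonal {E : Type*} [NormedAddCommGroup E]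
    [InnerProductSpace ℝ E] [FiniteDimensional ℝ E] {k : ℕ} (hk : k < Module.finrank ℝ E)
    {ξ : E} (hξ : ξ ≠ 0) :
    ∃ α : Submodule ℝ E, Module.finrank ℝ α = k ∧ ξ ∈ αᗮ := by
  have hW : Module.finrank ℝ (ℝ ∙ ξ)ᗮ + 1 = Module.finrank ℝ E := by
    rw [← finrank_span_singleton (K := ℝ) hξ, add_comm, Submodule.finrank_add_finrank_orthogonal]
  obtain ⟨α, hαW, hα⟩ := (ℝ ∙ ξ)ᗮ.exists_le_finrank_eq (k := k) (by omega)
  exact ⟨α, hα, (Submodule.isOrtho_iff_le.mpr hαW).ge (Submodule.mem_span_singleton_self ξ)⟩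

section Fourier

variable {F : Type*} [NormedAddCommGroup F] [InnerProductSpace ℝ F] [MeasurableSpace F]

open Complex in
theorem norm_fourierT_sub_one_le [BorelSpace F] [CompleteSpace F] [SecondCountableTopology F]
    (μ : Measure F) [IsProbabilityMeasure μ]
    (h2 : Integrable (fun x => ‖x‖ ^ 2) μ) (hb : ∫ x, x ∂μ = 0) (ξ : F) :
    ‖fourierT μ ξ - 1‖ ≤ 2 * (∫ x, ‖x‖ ^ 2 ∂μ) * ‖ξ‖ ^ 2 := by
  have hid : Integrable id μ :=
    ((memLp_two_iff_integrable_sq_norm aestronglyMeasurable_id).2 h2).integrable one_le_two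
  have hexp : Integrable (fun x => exp (-I * ((inner ℝ x ξ : ℝ) : ℂ))) μ := by
    refine (integrable_const (1 : ℂ)).mono (by fun_prop) (ae_of_all _ fun x => ?_)
    simp [norm_exp]
  have hcentered : ∫ x, ((inner ℝ x ξ : ℝ) : ℂ) ∂μ = 0 := by
    have : ∫ x, inner ℝ x ξ ∂μ = 0 := by simpa [real_inner_comm, hb] using integral_inner hid ξ
    rw [integral_complex_ofReal, this, Complex.ofReal_zero]
  have hsplit : fourierT μ ξ - 1 =
      ∫ x, (exp (-I * ((inner ℝ x ξ : ℝ) : ℂ)) - 1 + I * ((inner ℝ x ξ : ℝ) : ℂ)) ∂μ := by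
    have hexp1 : Integrable (fun x => exp (-I * ((inner ℝ x ξ : ℝ) : ℂ)) - 1) μ :=
      hexp.sub (integrable_const 1)
    have hlin : Integrable (fun x => I * ((inner ℝ x ξ : ℝ) : ℂ)) μ :=
      (hid.inner_const ξ).ofReal.const_mul I
    rw [integral_add hexp1 hlin,
      integral_sub hexp (integrable_const 1), integral_const_mul, hcentered]
    simp [fourierT]
  rw [hsplit]
  calc _ ≤ ∫ x, ‖exp (-I * ((inner ℝ x ξ : ℝ) : ℂ)) - 1 + I * ((inner ℝ x ξ : ℝ) : ℂ)‖ ∂μ :=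
        norm_integral_le_integral_norm _
    _ ≤ ∫ x, 2 * ‖ξ‖ ^ 2 * ‖x‖ ^ 2 ∂μ := by
        refine integral_mono_of_nonneg (ae_of_all _ fun x => norm_nonneg _)
          (h2.const_mul _) (ae_of_all _ fun x => ?_)
        refine (norm_exp_neg_I_mul_sub_one_add_I_mul_le _).trans ?_
        have : inner ℝ x ξ ^ 2 ≤ (‖x‖ * ‖ξ‖) ^ 2 :=
          sq_le_sq.2 ((abs_real_inner_le_norm x ξ).trans (le_abs_self _))
        nlinarith
    _ = 2 * (∫ x, ‖x‖ ^ 2 ∂μ) * ‖ξ‖ ^ 2 := by rw [integral_const_mul]; ring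

theorem norm_fourierT_sub_fourierT_div_le [BorelSpace F] [CompleteSpace F]
    [SecondCountableTopology F] (μ ν : Measure F) [IsProbabilityMeasure μ] [IsProbabilityMeasure ν]
    (h2μ : Integrable (fun x => ‖x‖ ^ 2) μ) (h2ν : Integrable (fun x => ‖x‖ ^ 2) ν)
    (hbμ : ∫ x, x ∂μ = 0) (hbν : ∫ x, x ∂ν = 0) (ξ : F) :
    ‖fourierT μ ξ - fourierT ν ξ‖ / ‖ξ‖ ^ 2 ≤ 2 * (∫ x, ‖x‖ ^ 2 ∂μ + ∫ x, ‖x‖ ^ 2 ∂ν) := by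
  refine div_le_of_le_mul₀ (by positivity) (by positivity) ?_
  calc ‖fourierT μ ξ - fourierT ν ξ‖ = ‖(fourierT μ ξ - 1) - (fourierT ν ξ - 1)‖ := by ring_nf
    _ ≤ ‖fourierT μ ξ - 1‖ + ‖fourierT ν ξ - 1‖ := norm_sub_le _ _
    _ ≤ 2 * (∫ x, ‖x‖ ^ 2 ∂μ) * ‖ξ‖ ^ 2 + 2 * (∫ x, ‖x‖ ^ 2 ∂ν) * ‖ξ‖ ^ 2 :=
        add_le_add (norm_fourierT_sub_one_le μ h2μ hbμ ξ) (norm_fourierT_sub_one_le ν h2ν hbν ξ)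
    _ = _ := by ring

theorem fourierT_map_orthogonalProjectionOnto [BorelSpace F] (μ : Measure F)
    (K : Submodule ℝ F) [K.HasOrthogonalProjection] (ξ : K) :
    fourierT (μ.map K.orthogonalProjectionOnto) ξ = fourierT μ ξ := by
  unfold fourierT
  rw [integral_map K.orthogonalProjectionOnto.continuous.aemeasurable (by fun_prop)]
  simp only [Submodule.inner_orthogonalProjectionOnto_eq_of_mem_right]

theorem fourierDist2_map_orthogonalProjectionOnto [BorelSpace F] (μ ν : Measure F)
    (K : Submodule ℝ F) [K.HasOrthogonalProjection] :
    fourierDist2 (μ.map K.orthogonalProjectionOnto) (ν.map K.orthogonalProjectionOnto) =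
      ⨆ η : {η : K // η ≠ 0}, ‖fourierT μ η - fourierT ν η‖ / ‖((η : K) : F)‖ ^ 2 := by
  simp only [fourierDist2, fourierT_map_orthogonalProjectionOnto, Submodule.coe_norm]

end Fourier

/-- For centered probability measures with finite second moment, the supremum over
`k`-dimensional subspaces `α` of the Fourier metric `d₂` between the projections
`P_α μ` and `P_α ν` equals `d₂(μ,ν)`. -/
theorem sup_fourierDist2_proj_eq (d k : ℕ) (hk : 1 ≤ k) (hkd : k ≤ d - 1)
    (μ ν : Measure (EuclideanSpace ℝ (Fin d)))
    [IsProbabilityMeasure μ] [IsProbabilityMeasure ν]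
    (h2μ : Integrable (fun x => ‖x‖ ^ 2) μ) (h2ν : Integrable (fun x => ‖x‖ ^ 2) ν)
    (hbμ : ∫ x, x ∂μ = 0) (hbν : ∫ x, x ∂ν = 0) :
    (⨆ α : {α : Submodule ℝ (EuclideanSpace ℝ (Fin d)) // Module.finrank ℝ α = k},
        fourierDist2 (μ.map (fun x => Submodule.orthogonalProjection (α : Submodule ℝ (EuclideanSpace ℝ (Fin d)))ᗮ x))
          (ν.map (fun x => Submodule.orthogonalProjection (α : Submodule ℝ (EuclideanSpace ℝ (Fin d)))ᗮ x)))
      = fourierDist2 μ ν := by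
  set q : {ξ : EuclideanSpace ℝ (Fin d) // ξ ≠ 0} → ℝ := fun ξ =>
    ‖fourierT μ ξ - fourierT ν ξ‖ / ‖(ξ : EuclideanSpace ℝ (Fin d))‖ ^ 2
  have hq : BddAbove (Set.range q) := ⟨_, Set.forall_mem_range.2 fun ξ =>
    norm_fourierT_sub_fourierT_div_le μ ν h2μ h2ν hbμ hbν ξ⟩
  simp only [fourierDist2_map_orthogonalProjectionOnto]
  refine Real.iSup_iSup_comp_eq_iSup (f := q) (fun ξ => by positivity) hq
    (fun (α : {α : Submodule ℝ (EuclideanSpace ℝ (Fin d)) // Module.finrank ℝ α = k})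
      (η : {η : (α : Submodule ℝ (EuclideanSpace ℝ (Fin d)))ᗮ // η ≠ 0}) =>
      ⟨η, Submodule.coe_eq_zero.not.2 η.2⟩) fun ξ => ?_
  obtain ⟨α, hα, hξα⟩ :=
    exists_finrank_eq_mem_orthogonal (k := k) (by rw [finrank_euclideanSpace_fin]; omega) ξ.2
  exact ⟨⟨α, hα⟩, ⟨⟨ξ, hξα⟩, by simpa using ξ.2⟩, rfl⟩
end
end

section
/- The generalized Fourier metric d̃_2(μ,ν) := d_2(μ̄_0, ν̄_0) + |m⃗_μ - m⃗_ν| + |M_μ - M_ν| is a metric on the set of positive Radon measures on ℝ^d with finite second moment and positive total mass; in particular, d̃_2(μ,ν) = 0 implies μ = ν. -/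
open MeasureTheory

noncomputable section

/-- The barycenter `m⃗_μ = (1/M_μ) ∫ x dμ(x)`. -/
def bary {F : Type*} [NormedAddCommGroup F] [NormedSpace ℝ F] [MeasurableSpace F]
    (μ : Measure F) : F :=
  ((μ Set.univ).toReal)⁻¹ • ∫ x, x ∂μ

/-- The centered normalization `μ̄₀ = (1/M_μ) T_{m⃗_μ} μ`. -/
def centerNorm {F : Type*} [NormedAddCommGroup F] [NormedSpace ℝ F] [MeasurableSpace F]
    (μ : Measure F) : Measure F :=
  (μ Set.univ)⁻¹ • μ.map (fun x => x - bary μ)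

/-- The generalized Fourier metric
`d̃₂(μ,ν) = d₂(μ̄₀, ν̄₀) + |m⃗_μ - m⃗_ν| + |M_μ - M_ν|`. -/
def fourierDistTilde2 {F : Type*} [NormedAddCommGroup F] [InnerProductSpace ℝ F]
    [MeasurableSpace F] (μ ν : Measure F) : ℝ :=
  fourierDist2 (centerNorm μ) (centerNorm ν) + ‖bary μ - bary ν‖
    + |(μ Set.univ).toReal - (ν Set.univ).toReal|

/-!
Each of the three summands of `d̃₂` is symmetric and satisfies the triangle inequality, provided
the supremum defining `d₂` is finite (an unbounded real `⨆` is `0`). For a probability measure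
`ρ` with finite second moment, `|e^{it} - 1 - it| ≤ 2t²` gives
`ρ̂(ξ) = 1 - i⟨m⃗_ρ, ξ⟩ + O(|ξ|²)`, so two such measures with the same barycenter, in particular
two centered normalizations, have `|ρ̂ - τ̂| = O(|ξ|²)`. If `d̃₂(μ,ν) = 0`, then `μ̄₀` and `ν̄₀`
have the same Fourier transform, hence coincide, and `μ = M_μ · T_{-m⃗_μ} μ̄₀ = ν`.
-/

open Complex
open scoped RealInnerProductSpace

lemma norm_cexp_ofReal_mul_I_sub_one_sub_le (t : ℝ) :
    ‖cexp (t * I) - 1 - t * I‖ ≤ 2 * t ^ 2 := by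
  have hnorm : ‖(t : ℂ) * I‖ = |t| := by simp
  rcases le_or_gt |t| 1 with ht | ht
  · calc _ ≤ ‖(t : ℂ) * I‖ ^ 2 := norm_exp_sub_one_sub_id_le (hnorm ▸ ht)
      _ = t ^ 2 := by rw [hnorm, sq_abs]
      _ ≤ 2 * t ^ 2 := by nlinarith [sq_nonneg t]
  · calc _ ≤ ‖cexp (t * I) - 1‖ + ‖(t : ℂ) * I‖ := norm_sub_le _ _
      _ ≤ |t| + |t| := by
          rw [hnorm, mul_comm]
          gcongr
          exact Real.norm_exp_I_mul_ofReal_sub_one_le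
      _ ≤ 2 * t ^ 2 := by nlinarith [sq_abs t]

lemma integrable_id_of_integrable_norm_sq {E : Type*} [NormedAddCommGroup E] [MeasurableSpace E]
    [OpensMeasurableSpace E] [SecondCountableTopology E] {μ : Measure E} [IsFiniteMeasure μ]
    (h2 : Integrable (fun x => ‖x‖ ^ 2) μ) : Integrable (fun x : E => x) μ :=
  ((memLp_two_iff_integrable_sq_norm aestronglyMeasurable_id).2 h2).integrable one_le_two

section CharFun

variable {E : Type*} [NormedAddCommGroup E] [InnerProductSpace ℝ E] [CompleteSpace E]
  [MeasurableSpace E] [BorelSpace E] [SecondCountableTopology E] {μ ν : Measure E}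

lemma norm_charFun_sub_taylor_le [IsFiniteMeasure μ] (h2 : Integrable (fun x => ‖x‖ ^ 2) μ)
    (t : E) :
    ‖charFun μ t - μ.real Set.univ - ⟪∫ x, x ∂μ, t⟫ * I‖ ≤ 2 * (∫ x, ‖x‖ ^ 2 ∂μ) * ‖t‖ ^ 2 := by
  have hinner : Integrable (fun x => (⟪x, t⟫ : ℂ) * I) μ := by
    refine (((innerSL ℝ t).integrable_comp (integrable_id_of_integrable_norm_sq h2)).ofReal.mul_const
      I).congr (ae_of_all _ fun x => ?_)
    simp [real_inner_comm]
  have hexp : Integrable (fun x => cexp (⟪x, t⟫ * I)) μ :=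
    (integrable_const (1 : ℝ)).mono' (by fun_prop) (ae_of_all _ fun x => by
      rw [norm_exp_ofReal_mul_I])
  have hintegral : charFun μ t - μ.real Set.univ - ⟪∫ x, x ∂μ, t⟫ * I
      = ∫ x, (cexp (⟪x, t⟫ * I) - 1 - ⟪x, t⟫ * I) ∂μ := by
    rw [integral_sub (f := fun x => cexp (⟪x, t⟫ * I) - 1) (hexp.sub (integrable_const 1)) hinner,
      integral_sub hexp (integrable_const 1),
      integral_const, integral_mul_const, integral_complex_ofReal, real_inner_comm,
      ← integral_inner (integrable_id_of_integrable_norm_sq h2)]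
    simp [charFun_apply, real_inner_comm]
  rw [hintegral]
  calc _ ≤ ∫ x, 2 * ‖t‖ ^ 2 * ‖x‖ ^ 2 ∂μ := by
        refine norm_integral_le_of_norm_le (h2.const_mul _) (ae_of_all _ fun x => ?_)
        calc _ ≤ 2 * ⟪x, t⟫ ^ 2 := norm_cexp_ofReal_mul_I_sub_one_sub_le _
          _ ≤ 2 * (‖x‖ * ‖t‖) ^ 2 := by
              gcongr 2 * ?_
              exact sq_le_sq' (neg_le_of_abs_le (abs_real_inner_le_norm x t))
                (real_inner_le_norm x t)
          _ = 2 * ‖t‖ ^ 2 * ‖x‖ ^ 2 := by ring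
    _ = 2 * (∫ x, ‖x‖ ^ 2 ∂μ) * ‖t‖ ^ 2 := by rw [integral_const_mul]; ring

lemma norm_charFun_sub_charFun_le [IsProbabilityMeasure μ] [IsProbabilityMeasure ν]
    (h2μ : Integrable (fun x => ‖x‖ ^ 2) μ) (h2ν : Integrable (fun x => ‖x‖ ^ 2) ν)
    (hmean : ∫ x, x ∂μ = ∫ x, x ∂ν) (t : E) :
    ‖charFun μ t - charFun ν t‖ ≤ 2 * ((∫ x, ‖x‖ ^ 2 ∂μ) + ∫ x, ‖x‖ ^ 2 ∂ν) * ‖t‖ ^ 2 := by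
  have hμ := norm_charFun_sub_taylor_le h2μ t
  have hν := norm_charFun_sub_taylor_le h2ν t
  rw [probReal_univ, hmean] at hμ
  rw [probReal_univ] at hν
  calc _ = ‖(charFun μ t - (1 : ℝ) - ⟪∫ x, x ∂ν, t⟫ * I)
          - (charFun ν t - (1 : ℝ) - ⟪∫ x, x ∂ν, t⟫ * I)‖ := by ring_nf
    _ ≤ _ := (norm_sub_le _ _).trans (by linarith)

end CharFun

section FourierDist2

variable {E : Type*} [NormedAddCommGroup E] [InnerProductSpace ℝ E] [MeasurableSpace E]

lemma fourierT_eq_charFun (μ : Measure E) (ξ : E) : fourierT μ ξ = charFun μ (-ξ) := by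
  simp [fourierT, charFun_apply, inner_neg_right, mul_comm]

lemma fourierDist2_nonneg (μ ν : Measure E) : 0 ≤ fourierDist2 μ ν :=
  Real.iSup_nonneg fun _ => by positivity

lemma fourierDist2_comm (μ ν : Measure E) : fourierDist2 μ ν = fourierDist2 ν μ := by
  simp only [fourierDist2, norm_sub_rev]

variable [CompleteSpace E] [BorelSpace E] [SecondCountableTopology E] {μ ν σ : Measure E}

lemma bddAbove_fourierDist2 [IsProbabilityMeasure μ] [IsProbabilityMeasure ν]
    (h2μ : Integrable (fun x => ‖x‖ ^ 2) μ) (h2ν : Integrable (fun x => ‖x‖ ^ 2) ν)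
    (hmean : ∫ x, x ∂μ = ∫ x, x ∂ν) :
    BddAbove (Set.range fun ξ : {ξ : E // ξ ≠ 0} =>
      ‖fourierT μ ξ - fourierT ν ξ‖ / ‖(ξ : E)‖ ^ 2) := by
  refine ⟨2 * ((∫ x, ‖x‖ ^ 2 ∂μ) + ∫ x, ‖x‖ ^ 2 ∂ν), Set.forall_mem_range.2 fun ξ => ?_⟩
  rw [div_le_iff₀ (by have := ξ.2; positivity), fourierT_eq_charFun, fourierT_eq_charFun,
    ← norm_neg (ξ : E)]
  exact norm_charFun_sub_charFun_le h2μ h2ν hmean _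

lemma fourierDist2_triangle [IsProbabilityMeasure μ] [IsProbabilityMeasure ν]
    [IsProbabilityMeasure σ] (h2μ : Integrable (fun x => ‖x‖ ^ 2) μ)
    (h2ν : Integrable (fun x => ‖x‖ ^ 2) ν) (h2σ : Integrable (fun x => ‖x‖ ^ 2) σ)
    (hμν : ∫ x, x ∂μ = ∫ x, x ∂ν) (hνσ : ∫ x, x ∂ν = ∫ x, x ∂σ) :
    fourierDist2 μ σ ≤ fourierDist2 μ ν + fourierDist2 ν σ := by
  refine Real.iSup_le (fun ξ => ?_) (add_nonneg (fourierDist2_nonneg _ _) (fourierDist2_nonneg _ _))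
  calc _ ≤ (‖fourierT μ ξ - fourierT ν ξ‖ + ‖fourierT ν ξ - fourierT σ ξ‖) / ‖(ξ : E)‖ ^ 2 := by
        gcongr
        exact norm_sub_le_norm_sub_add_norm_sub _ _ _
    _ ≤ _ := by
        rw [add_div]
        exact add_le_add (le_ciSup (bddAbove_fourierDist2 h2μ h2ν hμν) ξ)
          (le_ciSup (bddAbove_fourierDist2 h2ν h2σ hνσ) ξ)

lemma eq_of_fourierDist2_eq_zero [IsProbabilityMeasure μ] [IsProbabilityMeasure ν]
    (h2μ : Integrable (fun x => ‖x‖ ^ 2) μ) (h2ν : Integrable (fun x => ‖x‖ ^ 2) ν)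
    (hmean : ∫ x, x ∂μ = ∫ x, x ∂ν) (h : fourierDist2 μ ν = 0) : μ = ν := by
  refine Measure.ext_of_charFun (funext fun t => ?_)
  rcases eq_or_ne t 0 with rfl | ht
  · simp [charFun_zero]
  have hle := le_ciSup (bddAbove_fourierDist2 h2μ h2ν hmean) ⟨-t, neg_ne_zero.2 ht⟩
  rw [← fourierDist2, h, fourierT_eq_charFun, fourierT_eq_charFun, neg_neg] at hle
  have hpos : 0 < ‖t‖ ^ 2 := by positivity
  rw [← sub_eq_zero, ← norm_le_zero_iff]
  simpa [div_nonpos_iff, hpos.not_ge, hpos.le] using hle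

end FourierDist2

section CenterNorm

variable {E : Type*} [NormedAddCommGroup E] [NormedSpace ℝ E] [MeasurableSpace E] [BorelSpace E]
  (μ : Measure E) [IsFiniteMeasure μ]

lemma isProbabilityMeasure_centerNorm (hμ : μ Set.univ ≠ 0) :
    IsProbabilityMeasure (centerNorm μ) := by
  constructor
  rw [centerNorm, Measure.smul_apply, Measure.map_apply (measurable_sub_const _) MeasurableSet.univ,
    Set.preimage_univ, smul_eq_mul, ENNReal.inv_mul_cancel hμ (measure_ne_top μ _)]

lemma mass_smul_map_centerNorm_add_bary (hμ : μ Set.univ ≠ 0) :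
    μ Set.univ • (centerNorm μ).map (· + bary μ) = μ := by
  rw [centerNorm, Measure.map_smul, Measure.map_map (measurable_add_const _) (measurable_sub_const _),
    smul_smul, ENNReal.mul_inv_cancel hμ (measure_ne_top μ _), one_smul]
  simp [Function.comp_def]

variable [SecondCountableTopology E]

lemma integrable_norm_sq_centerNorm (hμ : μ Set.univ ≠ 0) (h2 : Integrable (fun x => ‖x‖ ^ 2) μ) :
    Integrable (fun x => ‖x‖ ^ 2) (centerNorm μ) := by
  have hmemLp : MemLp (fun x : E => x - bary μ) 2 μ :=
    ((memLp_two_iff_integrable_sq_norm aestronglyMeasurable_id).2 h2).sub (memLp_const _)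
  rw [centerNorm, ← memLp_two_iff_integrable_sq_norm (f := fun x : E => x) aestronglyMeasurable_id]
  exact ((memLp_map_measure_iff aestronglyMeasurable_id
    (measurable_sub_const _).aemeasurable).2 hmemLp).smul_measure (ENNReal.inv_ne_top.2 hμ)

lemma integral_centerNorm_eq_zero [CompleteSpace E] (hμ : μ Set.univ ≠ 0)
    (h2 : Integrable (fun x => ‖x‖ ^ 2) μ) : ∫ x, x ∂(centerNorm μ) = 0 := by
  have hmass : (μ Set.univ).toReal ≠ 0 := (ENNReal.toReal_pos hμ (measure_ne_top μ _)).ne'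
  rw [centerNorm, integral_smul_measure,
    integral_map (f := fun x => x) (measurable_sub_const _).aemeasurable aestronglyMeasurable_id,
    integral_sub (integrable_id_of_integrable_norm_sq h2) (integrable_const _), integral_const,
    bary, measureReal_def, smul_inv_smul₀ hmass, sub_self, smul_zero]

end CenterNorm

section FourierDistTilde2

variable {E : Type*} [NormedAddCommGroup E] [InnerProductSpace ℝ E] [MeasurableSpace E]

lemma fourierDistTilde2_nonneg (μ ν : Measure E) : 0 ≤ fourierDistTilde2 μ ν :=
  add_nonneg (add_nonneg (fourierDist2_nonneg _ _) (norm_nonneg _)) (abs_nonneg _)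

lemma fourierDistTilde2_comm (μ ν : Measure E) : fourierDistTilde2 μ ν = fourierDistTilde2 ν μ := by
  rw [fourierDistTilde2, fourierDistTilde2, fourierDist2_comm, norm_sub_rev, abs_sub_comm]

variable [CompleteSpace E] [BorelSpace E] [SecondCountableTopology E] {μ ν σ : Measure E}
  [IsFiniteMeasure μ] [IsFiniteMeasure ν] [IsFiniteMeasure σ]

lemma fourierDistTilde2_triangle (hμ : μ Set.univ ≠ 0) (hν : ν Set.univ ≠ 0)
    (hσ : σ Set.univ ≠ 0) (h2μ : Integrable (fun x => ‖x‖ ^ 2) μ)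
    (h2ν : Integrable (fun x => ‖x‖ ^ 2) ν) (h2σ : Integrable (fun x => ‖x‖ ^ 2) σ) :
    fourierDistTilde2 μ σ ≤ fourierDistTilde2 μ ν + fourierDistTilde2 ν σ := by
  have := isProbabilityMeasure_centerNorm μ hμ
  have := isProbabilityMeasure_centerNorm ν hν
  have := isProbabilityMeasure_centerNorm σ hσ
  have hd2 := fourierDist2_triangle (integrable_norm_sq_centerNorm μ hμ h2μ)
    (integrable_norm_sq_centerNorm ν hν h2ν) (integrable_norm_sq_centerNorm σ hσ h2σ)
    ((integral_centerNorm_eq_zero μ hμ h2μ).trans (integral_centerNorm_eq_zero ν hν h2ν).symm)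
    ((integral_centerNorm_eq_zero ν hν h2ν).trans (integral_centerNorm_eq_zero σ hσ h2σ).symm)
  have hbary := norm_sub_le_norm_sub_add_norm_sub (bary μ) (bary ν) (bary σ)
  have hmass := abs_sub_le (μ Set.univ).toReal (ν Set.univ).toReal (σ Set.univ).toReal
  simp only [fourierDistTilde2]
  linarith

lemma eq_of_fourierDistTilde2_eq_zero (hμ : μ Set.univ ≠ 0) (hν : ν Set.univ ≠ 0)
    (h2μ : Integrable (fun x => ‖x‖ ^ 2) μ) (h2ν : Integrable (fun x => ‖x‖ ^ 2) ν)
    (h : fourierDistTilde2 μ ν = 0) : μ = ν := by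
  have := isProbabilityMeasure_centerNorm μ hμ
  have := isProbabilityMeasure_centerNorm ν hν
  have hd2 := fourierDist2_nonneg (centerNorm μ) (centerNorm ν)
  have hbary := norm_nonneg (bary μ - bary ν)
  have hmass := abs_nonneg ((μ Set.univ).toReal - (ν Set.univ).toReal)
  rw [fourierDistTilde2] at h
  have hcenter : centerNorm μ = centerNorm ν :=
    eq_of_fourierDist2_eq_zero (integrable_norm_sq_centerNorm μ hμ h2μ)
      (integrable_norm_sq_centerNorm ν hν h2ν)
      ((integral_centerNorm_eq_zero μ hμ h2μ).trans (integral_centerNorm_eq_zero ν hν h2ν).symm)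
      (by linarith)
  have hbary_eq : bary μ = bary ν := sub_eq_zero.1 (norm_eq_zero.1 (by linarith))
  have hmass_eq : μ Set.univ = ν Set.univ :=
    (ENNReal.toReal_eq_toReal_iff' (measure_ne_top μ _) (measure_ne_top ν _)).1
      (sub_eq_zero.1 (abs_eq_zero.1 (by linarith)))
  rw [← mass_smul_map_centerNorm_add_bary μ hμ, ← mass_smul_map_centerNorm_add_bary ν hν,
    hcenter, hbary_eq, hmass_eq]

end FourierDistTilde2

/-- The generalized Fourier metric `d̃₂` is a metric on positive Radon measures on
`ℝ^d` with finite second moment and positive total mass: it is nonnegative,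
symmetric, satisfies the triangle inequality, and `d̃₂(μ,ν) = 0` implies `μ = ν`. -/
theorem fourierDistTilde2_is_metric (d : ℕ)
    (μ ν σ : Measure (EuclideanSpace ℝ (Fin d)))
    [IsFiniteMeasure μ] [IsFiniteMeasure ν] [IsFiniteMeasure σ]
    (hMμ : 0 < μ Set.univ) (hMν : 0 < ν Set.univ) (hMσ : 0 < σ Set.univ)
    (h2μ : Integrable (fun x => ‖x‖ ^ 2) μ) (h2ν : Integrable (fun x => ‖x‖ ^ 2) ν)
    (h2σ : Integrable (fun x => ‖x‖ ^ 2) σ) :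
    0 ≤ fourierDistTilde2 μ ν
    ∧ fourierDistTilde2 μ ν = fourierDistTilde2 ν μ
    ∧ fourierDistTilde2 μ σ ≤ fourierDistTilde2 μ ν + fourierDistTilde2 ν σ
    ∧ (fourierDistTilde2 μ ν = 0 → μ = ν) :=
  ⟨fourierDistTilde2_nonneg μ ν, fourierDistTilde2_comm μ ν,
    fourierDistTilde2_triangle hMμ.ne' hMν.ne' hMσ.ne' h2μ h2ν h2σ,
    eq_of_fourierDistTilde2_eq_zero hMμ.ne' hMν.ne' h2μ h2ν⟩
end
end

section
/- Lower Lipschitz bound of W_2 by d_2 for equal-barycenter measures with bounded second moments: if μ, ν are probability measures on ℝ^d with equal barycenters and second moments bounded by M_2, then d_2(μ,ν) ≤ 2√(M_2) · W_2(μ,ν). -/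
open MeasureTheory

noncomputable section

/-- The 2-Wasserstein distance, defined as the infimum over couplings of the root
quadratic transport cost. -/
def W2 {F : Type*} [NormedAddCommGroup F] [MeasurableSpace F] (μ ν : Measure F) : ℝ :=
  sInf {r : ℝ | ∃ π : Measure (F × F), π.map Prod.fst = μ ∧ π.map Prod.snd = ν ∧
    r = Real.sqrt (∫ p, ‖p.1 - p.2‖ ^ 2 ∂π)}

open Complex RealInnerProductSpace

/-! For any coupling `π` of `μ` and `ν`, put `e x = exp (-i⟪x, ξ⟫)` and `c = ⟪x - y, ξ⟫`.
Equal barycenters give `∫ c dπ = 0`, so `μ̂ ξ - ν̂ ξ = ∫ (e x - e y + i c) dπ`, and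
`e x - e y + i c = e y (e^{-ic} - 1 + ic) - ic (e y - 1)` is bounded pointwise by
`|ξ|² (|y| |x - y| + |x - y|² / 2)`. Cauchy–Schwarz, `∫ |y|² dν ≤ M₂` and
`∫ |x - y|² dπ ≤ 2 ∫ |x|² dμ + 2 ∫ |y|² dν ≤ 4 M₂` bound this by `2 √M₂ ‖x - y‖_{L²(π)} |ξ|²`;
taking the infimum over couplings gives the claim. -/

lemma norm_cexp_I_mul_sub_one_sub_le_of_nonneg {x : ℝ} (hx : 0 ≤ x) :
    ‖cexp (I * x) - 1 - I * x‖ ≤ x ^ 2 / 2 := by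
  have hf (s : ℝ) : HasDerivAt (fun y : ℝ => cexp (I * y) - 1 - I * y)
      (I * (cexp (I * s) - 1)) s := by
    have h : HasDerivAt (fun z : ℂ => cexp (I * z) - 1 - I * z)
        (cexp (I * s) * (I * 1) - I * 1) s :=
      (((hasDerivAt_id' (s : ℂ)).const_mul I).cexp.sub_const 1).sub
        ((hasDerivAt_id' (s : ℂ)).const_mul I)
    exact h.comp_ofReal.congr_deriv (by ring)
  have hB (s : ℝ) : HasDerivAt (fun y : ℝ => y ^ 2 / 2) s s := by
    simpa using ((hasDerivAt_pow 2 s).div_const 2)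
  refine image_norm_le_of_norm_deriv_right_le_deriv_boundary (a := 0) (b := x)
    (fun s _ => (hf s).continuousAt.continuousWithinAt) (fun s _ => (hf s).hasDerivWithinAt)
    (by simp) hB (fun s hs => ?_) ⟨hx, le_rfl⟩
  rw [norm_mul, norm_I, one_mul]
  simpa [abs_of_nonneg hs.1] using Real.norm_exp_I_mul_ofReal_sub_one_le (x := s)

lemma norm_cexp_I_mul_sub_one_sub_le (x : ℝ) :
    ‖cexp (I * x) - 1 - I * x‖ ≤ x ^ 2 / 2 := by
  rcases le_total 0 x with hx | hx
  · exact norm_cexp_I_mul_sub_one_sub_le_of_nonneg hx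
  · have h := norm_cexp_I_mul_sub_one_sub_le_of_nonneg (neg_nonneg.mpr hx)
    have hconj : cexp (I * ↑(-x)) - 1 - I * ↑(-x) =
        (starRingEnd ℂ) (cexp (I * x) - 1 - I * x) := by
      simp [← Complex.exp_conj]
    rwa [hconj, RCLike.norm_conj, neg_sq] at h

lemma norm_cexp_neg_I_mul_sub_add_le (a b : ℝ) :
    ‖cexp (-I * a) - cexp (-I * b) + I * (a - b)‖ ≤ |b| * |a - b| + (a - b) ^ 2 / 2 := by
  have hsplit : cexp (-I * a) - cexp (-I * b) + I * (a - b) =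
      cexp (I * ↑(-b)) * (cexp (I * ↑(b - a)) - 1 - I * ↑(b - a)) +
        I * ↑(b - a) * (cexp (I * ↑(-b)) - 1) := by
    have ha : -I * a = I * ↑(-b) + I * ↑(b - a) := by push_cast; ring
    have hb : -I * b = I * ↑(-b) := by push_cast; ring
    rw [ha, hb, Complex.exp_add]; push_cast; ring
  rw [hsplit]
  refine (norm_add_le _ _).trans ?_
  have h1 := norm_cexp_I_mul_sub_one_sub_le (b - a)
  have h2 : ‖cexp (I * ↑(-b)) - 1‖ ≤ |b| := by
    simpa using Real.norm_exp_I_mul_ofReal_sub_one_le (x := -b)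
  rw [norm_mul, norm_exp_I_mul_ofReal, one_mul, norm_mul, norm_mul, norm_I, one_mul,
    norm_real, Real.norm_eq_abs, abs_sub_comm]
  nlinarith [abs_nonneg (a - b)]

lemma sqrt_mul_sqrt_add_half_le {A C M : ℝ} (hA : A ≤ M) (hC₀ : 0 ≤ C) (hC : C ≤ 4 * M) :
    √A * √C + C / 2 ≤ 2 * √M * √C := by
  have hM : 0 ≤ M := by linarith
  have hAM : √A ≤ √M := Real.sqrt_le_sqrt hA
  have hCM : √C ≤ 2 * √M :=
    Real.sqrt_le_iff.2 ⟨by positivity, by rw [mul_pow, Real.sq_sqrt hM]; linarith⟩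
  have hCC := Real.mul_self_sqrt hC₀
  nlinarith [Real.sqrt_nonneg C]

lemma norm_cexp_neg_I_inner_sub_add_le {F : Type*} [NormedAddCommGroup F]
    [InnerProductSpace ℝ F] (x y ξ : F) :
    ‖cexp (-I * ⟪x, ξ⟫) - cexp (-I * ⟪y, ξ⟫) + I * ⟪x - y, ξ⟫‖ ≤
      ‖ξ‖ ^ 2 * (‖y‖ * ‖x - y‖ + ‖x - y‖ ^ 2 / 2) := by
  have hb : |⟪y, ξ⟫| ≤ ‖y‖ * ‖ξ‖ := abs_real_inner_le_norm y ξ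
  have hab : |⟪x, ξ⟫ - ⟪y, ξ⟫| ≤ ‖x - y‖ * ‖ξ‖ := by
    rw [← inner_sub_left]; exact abs_real_inner_le_norm _ _
  rw [inner_sub_left, ofReal_sub]
  refine (norm_cexp_neg_I_mul_sub_add_le _ _).trans ?_
  rw [← sq_abs (_ - _)]
  have hab2 := pow_le_pow_left₀ (abs_nonneg _) hab 2
  have hbab := mul_le_mul hb hab (abs_nonneg _) (by positivity)
  nlinarith

section Integral

variable {Ω : Type*} {mΩ : MeasurableSpace Ω} {P : Measure Ω}

lemma integral_mul_le_sqrt_mul_sqrt {f g : Ω → ℝ} (hf₀ : 0 ≤ᵐ[P] f)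
    (hg₀ : 0 ≤ᵐ[P] g) (hf : MemLp f 2 P) (hg : MemLp g 2 P) :
    ∫ ω, f ω * g ω ∂P ≤ √(∫ ω, f ω ^ 2 ∂P) * √(∫ ω, g ω ^ 2 ∂P) := by
  have h := integral_mul_le_Lp_mul_Lq_of_nonneg Real.HolderConjugate.two_two hf₀ hg₀
    (by rwa [ENNReal.ofReal_ofNat]) (by rwa [ENNReal.ofReal_ofNat])
  simpa only [Real.rpow_two, Real.sqrt_eq_rpow] using h

lemma integral_norm_sub_sq_le {E : Type*} [NormedAddCommGroup E] {X Y : Ω → E}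
    (hX : MemLp X 2 P) (hY : MemLp Y 2 P) :
    ∫ ω, ‖X ω - Y ω‖ ^ 2 ∂P ≤ 2 * ∫ ω, ‖X ω‖ ^ 2 ∂P + 2 * ∫ ω, ‖Y ω‖ ^ 2 ∂P := by
  have hX2 := (memLp_two_iff_integrable_sq_norm hX.1).1 hX
  have hY2 := (memLp_two_iff_integrable_sq_norm hY.1).1 hY
  rw [← integral_const_mul, ← integral_const_mul,
    ← integral_add (hX2.const_mul 2) (hY2.const_mul 2)]
  refine integral_mono ((memLp_two_iff_integrable_sq_norm (hX.sub hY).1).1 (hX.sub hY))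
    ((hX2.const_mul 2).add (hY2.const_mul 2)) fun ω => ?_
  have htri := norm_sub_le (X ω) (Y ω)
  nlinarith [norm_nonneg (X ω - Y ω), sq_nonneg (‖X ω‖ - ‖Y ω‖)]

variable {F : Type*} [NormedAddCommGroup F] [InnerProductSpace ℝ F] {X Y : Ω → F}
  [IsFiniteMeasure P]

lemma integrable_cexp_neg_I_inner (hX : AEStronglyMeasurable X P) (ξ : F) :
    Integrable (fun ω => cexp (-I * ⟪X ω, ξ⟫)) P := by
  refine .of_bound (by fun_prop) 1 (ae_of_all _ fun ω => ?_)
  rw [show -I * (⟪X ω, ξ⟫ : ℂ) = I * ↑(-⟪X ω, ξ⟫) by push_cast; ring, norm_exp_I_mul_ofReal]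

variable [CompleteSpace F]

lemma norm_integral_cexp_sub_le' (hX : MemLp X 2 P) (hY : MemLp Y 2 P)
    (hXY : ∫ ω, X ω ∂P = ∫ ω, Y ω ∂P) (ξ : F) :
    ‖∫ ω, cexp (-I * ⟪X ω, ξ⟫) ∂P - ∫ ω, cexp (-I * ⟪Y ω, ξ⟫) ∂P‖ ≤
      ‖ξ‖ ^ 2 * (√(∫ ω, ‖Y ω‖ ^ 2 ∂P) * √(∫ ω, ‖X ω - Y ω‖ ^ 2 ∂P) +
        (∫ ω, ‖X ω - Y ω‖ ^ 2 ∂P) / 2) := by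
  have hD : MemLp (X - Y) 2 P := hX.sub hY
  have hD2 : Integrable (fun ω => ‖X ω - Y ω‖ ^ 2) P :=
    (memLp_two_iff_integrable_sq_norm hD.1).1 hD
  have he : Integrable (fun ω => cexp (-I * ⟪X ω, ξ⟫) - cexp (-I * ⟪Y ω, ξ⟫)) P :=
    (integrable_cexp_neg_I_inner hX.1 ξ).sub (integrable_cexp_neg_I_inner hY.1 ξ)
  have hc : Integrable (fun ω => I * ⟪X ω - Y ω, ξ⟫) P :=
    (((hD.integrable one_le_two).inner_const ξ).ofReal).const_mul I
  have hc0 : ∫ ω, ⟪X ω - Y ω, ξ⟫ ∂P = 0 := by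
    simp_rw [real_inner_comm ξ]
    rw [integral_inner (f := fun ω => X ω - Y ω) (hD.integrable one_le_two),
      integral_sub (hX.integrable one_le_two) (hY.integrable one_le_two), hXY, sub_self,
      inner_zero_right]
  have hprod : Integrable (fun ω => ‖Y ω‖ * ‖X ω - Y ω‖) P := hY.norm.integrable_mul hD.norm
  calc _ = ‖∫ ω, (cexp (-I * ⟪X ω, ξ⟫) - cexp (-I * ⟪Y ω, ξ⟫) + I * ⟪X ω - Y ω, ξ⟫) ∂P‖ := by
        rw [integral_add he hc,
          integral_sub (integrable_cexp_neg_I_inner hX.1 ξ) (integrable_cexp_neg_I_inner hY.1 ξ),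
          integral_const_mul, integral_complex_ofReal, hc0, ofReal_zero, mul_zero, add_zero]
    _ ≤ ∫ ω, ‖ξ‖ ^ 2 * (‖Y ω‖ * ‖X ω - Y ω‖ + ‖X ω - Y ω‖ ^ 2 / 2) ∂P :=
        norm_integral_le_of_norm_le ((hprod.add (hD2.div_const 2)).const_mul _)
          (ae_of_all _ fun ω => norm_cexp_neg_I_inner_sub_add_le _ _ _)
    _ = ‖ξ‖ ^ 2 * (∫ ω, ‖Y ω‖ * ‖X ω - Y ω‖ ∂P + (∫ ω, ‖X ω - Y ω‖ ^ 2 ∂P) / 2) := by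
        rw [integral_const_mul, integral_add hprod (hD2.div_const 2), integral_div]
    _ ≤ _ := by
        gcongr
        exact integral_mul_le_sqrt_mul_sqrt (ae_of_all _ fun _ => norm_nonneg _)
          (ae_of_all _ fun _ => norm_nonneg _) hY.norm hD.norm

lemma norm_integral_cexp_sub_le (hX : MemLp X 2 P) (hY : MemLp Y 2 P)
    (hXY : ∫ ω, X ω ∂P = ∫ ω, Y ω ∂P) {M : ℝ} (hXM : ∫ ω, ‖X ω‖ ^ 2 ∂P ≤ M)
    (hYM : ∫ ω, ‖Y ω‖ ^ 2 ∂P ≤ M) (ξ : F) :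
    ‖∫ ω, cexp (-I * ⟪X ω, ξ⟫) ∂P - ∫ ω, cexp (-I * ⟪Y ω, ξ⟫) ∂P‖ ≤
      2 * √M * √(∫ ω, ‖X ω - Y ω‖ ^ 2 ∂P) * ‖ξ‖ ^ 2 := by
  have hC : ∫ ω, ‖X ω - Y ω‖ ^ 2 ∂P ≤ 4 * M := by
    linarith [integral_norm_sub_sq_le hX hY]
  calc _ ≤ _ := norm_integral_cexp_sub_le' hX hY hXY ξ
    _ ≤ ‖ξ‖ ^ 2 * (2 * √M * √(∫ ω, ‖X ω - Y ω‖ ^ 2 ∂P)) := by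
        gcongr
        exact sqrt_mul_sqrt_add_half_le hYM (integral_nonneg fun _ => by positivity) hC
    _ = _ := by ring

end Integral

section Wasserstein

variable {E : Type*} [NormedAddCommGroup E] [MeasurableSpace E]

lemma W2_nonneg (μ ν : Measure E) : 0 ≤ W2 μ ν :=
  Real.sInf_nonneg fun _ ⟨_, _, _, hr⟩ => hr ▸ Real.sqrt_nonneg _

lemma le_mul_W2 {μ ν : Measure E} [IsProbabilityMeasure μ] [IsProbabilityMeasure ν] {a c : ℝ}
    (hc : 0 ≤ c) (h : ∀ π : Measure (E × E), π.map Prod.fst = μ → π.map Prod.snd = ν →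
      a ≤ c * √(∫ p, ‖p.1 - p.2‖ ^ 2 ∂π)) :
    a ≤ c * W2 μ ν := by
  rw [W2, ← smul_eq_mul, ← Real.sInf_smul_of_nonneg hc]
  refine le_csInf ⟨_, Set.smul_mem_smul_set ⟨μ.prod ν, by simp, by simp, rfl⟩⟩ ?_
  rintro _ ⟨_, ⟨π, hπ₁, hπ₂, rfl⟩, rfl⟩
  exact h π hπ₁ hπ₂

end Wasserstein

section Fourier

variable {F : Type*} [NormedAddCommGroup F] [InnerProductSpace ℝ F] [MeasurableSpace F]

lemma fourierT_map [BorelSpace F] {Ω : Type*} {mΩ : MeasurableSpace Ω} {P : Measure Ω}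
    {X : Ω → F} (hX : AEMeasurable X P) (ξ : F) :
    fourierT (P.map X) ξ = ∫ ω, cexp (-I * ⟪X ω, ξ⟫) ∂P :=
  integral_map hX (by fun_prop)

lemma norm_fourierT_sub_le_of_coupling [BorelSpace F] [CompleteSpace F] {μ ν : Measure F}
    [IsFiniteMeasure μ] {π : Measure (F × F)} (hπ₁ : π.map Prod.fst = μ)
    (hπ₂ : π.map Prod.snd = ν) (hμ : MemLp id 2 μ) (hν : MemLp id 2 ν)
    (hbary : ∫ x, x ∂μ = ∫ x, x ∂ν) {M : ℝ} (hμM : ∫ x, ‖x‖ ^ 2 ∂μ ≤ M)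
    (hνM : ∫ x, ‖x‖ ^ 2 ∂ν ≤ M) (ξ : F) :
    ‖fourierT μ ξ - fourierT ν ξ‖ ≤ 2 * √M * √(∫ p, ‖p.1 - p.2‖ ^ 2 ∂π) * ‖ξ‖ ^ 2 := by
  subst hπ₁ hπ₂
  have : IsFiniteMeasure π := Measure.isFiniteMeasure_of_map measurable_fst.aemeasurable
  rw [integral_map (f := fun x => x) measurable_fst.aemeasurable hμ.1,
    integral_map (f := fun x => x) measurable_snd.aemeasurable hν.1] at hbary
  rw [integral_map (f := fun x => ‖x‖ ^ 2) measurable_fst.aemeasurable (by fun_prop)] at hμM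
  rw [integral_map (f := fun x => ‖x‖ ^ 2) measurable_snd.aemeasurable (by fun_prop)] at hνM
  rw [fourierT_map measurable_fst.aemeasurable, fourierT_map measurable_snd.aemeasurable]
  exact norm_integral_cexp_sub_le (hμ.comp_of_map measurable_fst.aemeasurable)
    (hν.comp_of_map measurable_snd.aemeasurable) hbary hμM hνM ξ

lemma fourierDist2_le {μ ν : Measure F} {C : ℝ} (hC : 0 ≤ C)
    (h : ∀ ξ, ‖fourierT μ ξ - fourierT ν ξ‖ ≤ C * ‖ξ‖ ^ 2) : fourierDist2 μ ν ≤ C :=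
  Real.iSup_le (fun ξ => div_le_of_le_mul₀ (by positivity) hC (h ξ)) hC

end Fourier

/-- Lower Lipschitz bound of `W₂` by `d₂` for probability measures with equal
barycenters and second moments bounded by `M₂`: `d₂(μ,ν) ≤ 2√M₂ · W₂(μ,ν)`. -/
theorem fourierDist2_le_W2 (d : ℕ) (M2 : ℝ)
    (μ ν : Measure (EuclideanSpace ℝ (Fin d)))
    [IsProbabilityMeasure μ] [IsProbabilityMeasure ν]
    (h2μ : Integrable (fun x => ‖x‖ ^ 2) μ) (h2ν : Integrable (fun x => ‖x‖ ^ 2) ν)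
    (hbary : ∫ x, x ∂μ = ∫ x, x ∂ν)
    (hM2μ : ∫ x, ‖x‖ ^ 2 ∂μ ≤ M2) (hM2ν : ∫ x, ‖x‖ ^ 2 ∂ν ≤ M2) :
    fourierDist2 μ ν ≤ 2 * Real.sqrt M2 * W2 μ ν := by
  have hμ : MemLp id 2 μ := (memLp_two_iff_integrable_sq_norm aestronglyMeasurable_id).2 h2μ
  have hν : MemLp id 2 ν := (memLp_two_iff_integrable_sq_norm aestronglyMeasurable_id).2 h2ν
  have hW2 := W2_nonneg μ ν
  refine fourierDist2_le (by positivity) fun ξ => ?_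
  rw [mul_right_comm]
  exact le_mul_W2 (by positivity) fun π hπ₁ hπ₂ =>
    (norm_fourierT_sub_le_of_coupling hπ₁ hπ₂ hμ hν hbary hM2μ hM2ν ξ).trans_eq (by ring)
end
end
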